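/- An equicontinuous flow on a compact metric space is uniformly almost periodic: for every ε > 0 there exists τ > 0 such that every interval of length τ contains a time t with d(Φ_t(x), x) < ε for all x in the space. -/
import Mathlib


/-- An equicontinuous flow on a compact metric space is uniformly almost periodic. -/
theorem equicontinuous_flow_uniformly_almost_periodic
    {X : Type*} [MetricSpace X] [CompactSpace X]
    (Φ : ℝ → X → X)
    (hcont : Continuous fun p : ℝ × X => Φ p.1 p.2)
    (hzero : ∀ x, Φ 0 x = x)
    (hadd : ∀ s t x, Φ (s + t) x = Φ s (Φ t x))
    (hequi : ∀ ε > 0, ∃ δ > 0, ∀ x y : X, dist x y < δ →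
      ∀ t : ℝ, dist (Φ t x) (Φ t y) < ε) :
    ∀ ε > 0, ∃ τ > 0, ∀ a : ℝ, ∃ t ∈ Set.Icc a (a + τ),
      ∀ x : X, dist (Φ t x) x < ε := by
  intro ε hε
  have hε3 : (0:ℝ) < ε / 3 := by positivity
  obtain ⟨δ, hδ, hδε⟩ := hequi (ε/3) hε3
  -- finite δ-net of X
  obtain ⟨s, hsfin, hscov⟩ :=
    Metric.totallyBounded_iff.mp (isCompact_univ : IsCompact (Set.univ : Set X)).totallyBounded δ hδ
  haveI : Fintype ↥s := hsfin.fintype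
  -- map into the finite product space
  set f : ℝ → (↥s → X) := fun t i => Φ t (i : X) with hf
  have hA : TotallyBounded (Set.range f) :=
    ((isCompact_univ : IsCompact (Set.univ : Set (↥s → X))).totallyBounded).subset (Set.subset_univ _)
  obtain ⟨T, hTsub, hTfin, hTcov⟩ :=
    totallyBounded_iff_subset.mp hA _ (Metric.dist_mem_uniformity hε3)
  -- finite set of reference times
  have key : ∃ T' : Set ℝ, T'.Finite ∧ ∀ u : ℝ, ∃ r ∈ T',
      ∀ i : ↥s, dist (Φ u (i : X)) (Φ r (i : X)) < ε / 3 := by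
    classical
    have hch : ∀ g ∈ T, ∃ r : ℝ, f r = g := fun g hg => hTsub hg
    choose c hc using hch
    refine ⟨(fun p : {g // g ∈ T} => c p.1 p.2) '' Set.univ, ?_, ?_⟩
    · haveI : Finite {g // g ∈ T} := hTfin
      exact Set.toFinite _
    · intro u
      have : f u ∈ ⋃ y ∈ T, {x | (x, y) ∈ {p : (↥s → X) × (↥s → X) | dist p.1 p.2 < ε/3}} :=
        hTcov ⟨u, rfl⟩
      obtain ⟨g, hg, hdist⟩ := Set.mem_iUnion₂.mp this
      refine ⟨c g hg, ⟨⟨g, hg⟩, Set.mem_univ _, rfl⟩, ?_⟩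
      intro i
      have hlt : dist (f u) (f (c g hg)) < ε / 3 := by
        rw [hc g hg]; exact hdist
      exact (dist_pi_lt_iff hε3).mp hlt i
  obtain ⟨T', hT'fin, hT'⟩ := key
  -- bound on reference times
  obtain ⟨M, hM⟩ := (hT'fin.image abs).bddAbove
  simp only [upperBounds, Set.mem_image, Set.mem_setOf_eq] at hM
  have hMabs : ∀ r ∈ T', |r| ≤ |M| := by
    intro r hr
    exact le_trans (hM ⟨r, hr, rfl⟩) (le_abs_self M)
  refine ⟨2 * (|M| + 1), by positivity, ?_⟩
  intro a
  set u : ℝ := a + (|M| + 1) with hu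
  obtain ⟨r, hrT, hr⟩ := hT' u
  have hrabs : |r| ≤ |M| := hMabs r hrT
  refine ⟨u - r, ?_, ?_⟩
  · constructor
    · have : r ≤ |M| := le_trans (le_abs_self r) hrabs
      simp only [hu]; linarith
    · have : -r ≤ |M| := le_trans (neg_le_abs r) hrabs
      simp only [hu]; linarith
  · intro x
    set y : X := Φ (-r) x with hy
    have hxy : Φ r y = x := by
      rw [hy, ← hadd]
      simp [hzero]
    have hty : Φ (u - r) x = Φ u y := by
      rw [hy, ← hadd, sub_eq_add_neg]
    -- find a net point near y
    have : y ∈ ⋃ z ∈ s, Metric.ball z δ := hscov (Set.mem_univ y)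
    obtain ⟨z, hz, hyz⟩ := Set.mem_iUnion₂.mp this
    rw [Metric.mem_ball] at hyz
    have h1 : dist (Φ u y) (Φ u z) < ε / 3 := hδε y z hyz u
    have h2 : dist (Φ u z) (Φ r z) < ε / 3 := hr ⟨z, hz⟩
    have h3 : dist (Φ r z) (Φ r y) < ε / 3 := by
      have := hδε z y (by rwa [dist_comm]) r
      exact this
    calc dist (Φ (u - r) x) x = dist (Φ u y) (Φ r y) := by rw [hty, hxy]
      _ ≤ dist (Φ u y) (Φ u z) + dist (Φ u z) (Φ r z) + dist (Φ r z) (Φ r y) :=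
          dist_triangle4 _ _ _ _
      _ < ε / 3 + ε / 3 + ε / 3 := by linarith
      _ = ε := by ring
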